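/- Let H and G be simple graphs, let V1, V2 be sets of vertices of G with X = V1 ∩ V2 and such that no edge of G has one endpoint in V1 \ V2 and the other endpoint in V2 \ V1. Let S, S1, S2 be pairwise disjoint sets of vertices of H such that H has no edge with one endpoint in S1 and the other in S2. Suppose φ1 is an injective map from S ∪ S1 to vertices of G mapping S into X and S1 into V1 \ V2, such that for all u, v ∈ S ∪ S1, {u, v} is an edge of H if and only if {φ1(u), φ1(v)} is an edge of G; and suppose φ2 is an injective map from S ∪ S2 to vertices of G agreeing with φ1 on S, mapping S2 into V2 \ V1, such that for all u, v ∈ S ∪ S2, {u, v} is an edge of H if and only if {φ2(u), φ2(v)} is an edge of G. Then the common extension φ of φ1 and φ2 to S ∪ S1 ∪ S2 is injective and satisfies, for all u, v ∈ S ∪ S1 ∪ S2, that {u, v} is an edge of H if and only if {φ(u), φ(v)} is an edge of G; that is, G contains the subgraph of H induced by S ∪ S1 ∪ S2 as an induced subgraph. -/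
import Mathlib


/-- Soundness of the Merge operation at a join node (induced-subgraph version).
Given a separation `(V1, V2)` of `G` with `X = V1 ∩ V2`, pairwise disjoint vertex
sets `S, S1, S2` of `H` with no `H`-edge between `S1` and `S2`, an induced copy
`φ1` of `H[S ∪ S1]` placing `S` in `X` and `S1` in `V1 \ V2`, and an induced copy
`φ2` of `H[S ∪ S2]` agreeing with `φ1` on `S` and placing `S2` in `V2 \ V1`,
their common extension `φ` is injective on `S ∪ S1 ∪ S2` and, for all
`u, v ∈ S ∪ S1 ∪ S2`, `u ~ v` in `H` iff `φ u ~ φ v` in `G`. -/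
theorem merge_sound_induced {VH VG : Type*} [Fintype VH] [Fintype VG]
    (H : SimpleGraph VH) (G : SimpleGraph VG)
    (V1 V2 X : Set VG) (hX : X = V1 ∩ V2)
    (hsep : ∀ a b : VG, G.Adj a b → a ∈ V1 \ V2 → b ∉ V2 \ V1)
    (S S1 S2 : Set VH)
    (hSS1 : Disjoint S S1) (hSS2 : Disjoint S S2) (hS1S2 : Disjoint S1 S2)
    (hHsep : ∀ u ∈ S1, ∀ v ∈ S2, ¬ H.Adj u v)
    (φ1 φ2 φ : VH → VG)
    (h1inj : Set.InjOn φ1 (S ∪ S1))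
    (h1S : ∀ u ∈ S, φ1 u ∈ X)
    (h1S1 : ∀ u ∈ S1, φ1 u ∈ V1 \ V2)
    (h1edge : ∀ u ∈ S ∪ S1, ∀ v ∈ S ∪ S1, (H.Adj u v ↔ G.Adj (φ1 u) (φ1 v)))
    (h2inj : Set.InjOn φ2 (S ∪ S2))
    (hagree : ∀ u ∈ S, φ2 u = φ1 u)
    (h2S2 : ∀ u ∈ S2, φ2 u ∈ V2 \ V1)
    (h2edge : ∀ u ∈ S ∪ S2, ∀ v ∈ S ∪ S2, (H.Adj u v ↔ G.Adj (φ2 u) (φ2 v)))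
    (hφ1 : ∀ u ∈ S ∪ S1, φ u = φ1 u)
    (hφ2 : ∀ u ∈ S ∪ S2, φ u = φ2 u) :
    Set.InjOn φ (S ∪ S1 ∪ S2) ∧
      ∀ u ∈ S ∪ S1 ∪ S2, ∀ v ∈ S ∪ S1 ∪ S2, (H.Adj u v ↔ G.Adj (φ u) (φ v)) := by
  have key : ∀ u ∈ S ∪ S1 ∪ S2, u ∈ S ∪ S1 ∨ u ∈ S2 := by
    intro u hu
    rcases hu with h | h
    · exact Or.inl h
    · exact Or.inr h
  -- cross case: images distinct and no edges between S1 and S2 images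
  have cross1 : ∀ u ∈ S1, φ u ∈ V1 \ V2 := fun u hu => by
    rw [hφ1 u (Or.inr hu)]; exact h1S1 u hu
  have cross2 : ∀ u ∈ S2, φ u ∈ V2 \ V1 := fun u hu => by
    rw [hφ2 u (Or.inr hu)]; exact h2S2 u hu
  constructor
  · intro u hu v hv heq
    rcases key u hu with hu1 | hu2 <;> rcases key v hv with hv1 | hv2
    · exact h1inj hu1 hv1 (by rwa [hφ1 u hu1, hφ1 v hv1] at heq)
    · rcases hu1 with huS | huS1
      · exact h2inj (Or.inl huS) (Or.inr hv2)
          (by rwa [hφ2 u (Or.inl huS), hφ2 v (Or.inr hv2)] at heq)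
      · exact absurd ((heq ▸ cross1 u huS1).2) (fun h => h (cross2 v hv2).1)
    · rcases hv1 with hvS | hvS1
      · exact h2inj (Or.inr hu2) (Or.inl hvS)
          (by rwa [hφ2 u (Or.inr hu2), hφ2 v (Or.inl hvS)] at heq)
      · exact absurd ((heq ▸ cross2 u hu2).2) (fun h => h (cross1 v hvS1).1)
    · exact h2inj (Or.inr hu2) (Or.inr hv2)
        (by rwa [hφ2 u (Or.inr hu2), hφ2 v (Or.inr hv2)] at heq)
  · intro u hu v hv
    rcases key u hu with hu1 | hu2 <;> rcases key v hv with hv1 | hv2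
    · rw [hφ1 u hu1, hφ1 v hv1]; exact h1edge u hu1 v hv1
    · rcases hu1 with huS | huS1
      · rw [hφ2 u (Or.inl huS), hφ2 v (Or.inr hv2)]
        exact h2edge u (Or.inl huS) v (Or.inr hv2)
      · constructor
        · intro h; exact absurd h (hHsep u huS1 v hv2)
        · intro h; exact absurd (cross2 v hv2)
            (hsep (φ u) (φ v) h (cross1 u huS1))
    · rcases hv1 with hvS | hvS1
      · rw [hφ2 u (Or.inr hu2), hφ2 v (Or.inl hvS)]
        exact h2edge u (Or.inr hu2) v (Or.inl hvS)
      · constructor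
        · intro h; exact absurd h.symm (hHsep v hvS1 u hu2)
        · intro h; exact absurd (cross2 u hu2)
            (hsep (φ v) (φ u) h.symm (cross1 v hvS1))
    · rw [hφ2 u (Or.inr hu2), hφ2 v (Or.inr hv2)]
      exact h2edge u (Or.inr hu2) v (Or.inr hv2)
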